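/- (Theorem 3.1, completeness) The family consisting of the n²−1 pairs (U_{ij}, V_{ij}) = (τ_j σ_i · c_i s_jᵀ, −τ_i σ_j · s_i c_jᵀ) for 0 ≤ i, j ≤ n−1 with (i,j) ≠ (0,0), together with the (n−1)² pairs (U⁰_{ij}, V⁰_{ij}) = (τ_i · c_i s_jᵀ, τ_j · s_i c_jᵀ) for 1 ≤ i, j ≤ n−1, is a linearly independent family of 2n(n−1) elements of ℝ^{n×(n−1)} × ℝ^{(n−1)×n}, and hence forms a basis of this 2n(n−1)-dimensional space. -/

import Mathlib

open Matrix Real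

/-- `τ_i = -2 sin(iπ/(2n))`. -/
noncomputable def tau (n i : ℕ) : ℝ := -2 * Real.sin ((i : ℝ) * Real.pi / (2 * n))

/-- `σ_i = 2(2 + cos(iπ/n))`. -/
noncomputable def sigma (n i : ℕ) : ℝ := 2 * (2 + Real.cos ((i : ℝ) * Real.pi / n))

/-- The vector `s_j ∈ ℝ^{n-1}` with entries `(s_j)_k = sin(kjπ/n)` (so `s_0 = 0`). -/
noncomputable def svec (n j : ℕ) : Fin (n - 1) → ℝ :=
  fun k => Real.sin (((((k : ℕ) + 1) * j : ℕ) : ℝ) * Real.pi / n)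

/-- The vector `c_j ∈ ℝ^n` with entries `(c_j)_k = ν_j cos((2k-1)jπ/(2n))`,
`ν_0 = 1/√2`, `ν_j = 1` for `1 ≤ j ≤ n-1`. -/
noncomputable def cvec (n j : ℕ) : Fin n → ℝ :=
  fun k =>
    (if j = 0 then 1 / Real.sqrt 2 else 1) *
      Real.cos (((2 * (k : ℕ) + 1) * j : ℕ) * Real.pi / (2 * n))

/-- Index type: pairs `(i,j)` with `0 ≤ i,j ≤ n-1`, `(i,j) ≠ (0,0)` (divergence-free
family), together with pairs `(i,j)` with `1 ≤ i,j ≤ n-1` (curl-free family). -/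
def eigIdx (n : ℕ) : Type :=
  {p : Fin n × Fin n // ¬((p.1 : ℕ) = 0 ∧ (p.2 : ℕ) = 0)} ⊕ (Fin (n - 1) × Fin (n - 1))

/-- The eigen-family: `(U_{ij}, V_{ij}) = (τ_j σ_i · c_i s_jᵀ, -τ_i σ_j · s_i c_jᵀ)`
for `(i,j) ≠ (0,0)`, and `(U⁰_{ij}, V⁰_{ij}) = (τ_i · c_i s_jᵀ, τ_j · s_i c_jᵀ)` for
`1 ≤ i,j ≤ n-1`. -/
noncomputable def eigFam (n : ℕ) :
    eigIdx n → Matrix (Fin n) (Fin (n - 1)) ℝ × Matrix (Fin (n - 1)) (Fin n) ℝ :=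
  Sum.elim
    (fun p =>
      ((tau n (p.1.2 : ℕ) * sigma n (p.1.1 : ℕ)) •
          Matrix.vecMulVec (cvec n (p.1.1 : ℕ)) (svec n (p.1.2 : ℕ)),
        (-(tau n (p.1.1 : ℕ) * sigma n (p.1.2 : ℕ))) •
          Matrix.vecMulVec (svec n (p.1.1 : ℕ)) (cvec n (p.1.2 : ℕ))))
    (fun q =>
      (tau n ((q.1 : ℕ) + 1) •
          Matrix.vecMulVec (cvec n ((q.1 : ℕ) + 1)) (svec n ((q.2 : ℕ) + 1)),
        tau n ((q.2 : ℕ) + 1) •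
          Matrix.vecMulVec (svec n ((q.1 : ℕ) + 1)) (cvec n ((q.2 : ℕ) + 1))))

instance (n : ℕ) : Fintype (eigIdx n) := by
  unfold eigIdx; infer_instance

-- telescoping sums

lemma tele1 (n : ℕ) (x : ℝ) :
    ∑ k ∈ Finset.range n, 2 * Real.sin x * Real.cos ((2 * (k:ℝ) + 1) * x)
      = Real.sin (2 * (n:ℝ) * x) := by
  induction n with
  | zero => simp
  | succ m ih =>
      rw [Finset.sum_range_succ, ih]
      have h : Real.sin (2 * ((m:ℝ) + 1) * x) - Real.sin (2 * (m:ℝ) * x)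
          = 2 * Real.sin x * Real.cos ((2 * (m:ℝ) + 1) * x) := by
        rw [Real.sin_sub_sin]
        ring_nf
      push_cast
      linarith

lemma tele2 (n : ℕ) (x : ℝ) :
    ∑ k ∈ Finset.range n, 2 * Real.sin x * Real.cos (2 * (k:ℝ) * x)
      = Real.sin (2 * (n:ℝ) * x - x) + Real.sin x := by
  induction n with
  | zero => simp
  | succ m ih =>
      rw [Finset.sum_range_succ, ih]
      have h : Real.sin (2 * ((m:ℝ) + 1) * x - x) - Real.sin (2 * (m:ℝ) * x - x)
          = 2 * Real.sin x * Real.cos (2 * (m:ℝ) * x) := by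
        rw [Real.sin_sub_sin]
        ring_nf
      push_cast
      linarith

lemma sinx_pos (n m : ℕ) (hm0 : 0 < m) (hm : m < 2 * n) :
    0 < Real.sin ((m:ℝ) * π / (2 * n)) := by
  have hn : 0 < n := by omega
  have h1 : (0:ℝ) < m := by exact_mod_cast hm0
  have h2 : (m:ℝ) < 2 * n := by exact_mod_cast hm
  have hn' : (0:ℝ) < n := by exact_mod_cast hn
  apply Real.sin_pos_of_pos_of_lt_pi
  · positivity
  · rw [div_lt_iff₀ (by positivity)]
    nlinarith [Real.pi_pos]

lemma key1 (n m : ℕ) (hm0 : 0 < m) (hm : m < 2 * n) :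
    ∑ k ∈ Finset.range n, Real.cos ((2 * (k:ℝ) + 1) * ((m:ℝ) * π / (2 * n))) = 0 := by
  have hn : 0 < n := by omega
  have hn' : (0:ℝ) < n := by exact_mod_cast hn
  set x : ℝ := (m:ℝ) * π / (2 * n) with hx
  have hs : 0 < Real.sin x := sinx_pos n m hm0 hm
  have ht := tele1 n x
  have h2 : 2 * (n:ℝ) * x = (m:ℝ) * π := by
    rw [hx]; field_simp
  rw [h2, Real.sin_nat_mul_pi, ← Finset.mul_sum] at ht
  have h3 : (2 * Real.sin x) ≠ 0 := by positivity
  exact (mul_eq_zero.mp ht).resolve_left h3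

lemma key2 (n m : ℕ) (hm0 : 0 < m) (hm : m < 2 * n) :
    ∑ k ∈ Finset.range n, Real.cos (2 * (k:ℝ) * ((m:ℝ) * π / (2 * n)))
      = if Even m then 0 else 1 := by
  have hn : 0 < n := by omega
  have hn' : (0:ℝ) < n := by exact_mod_cast hn
  set x : ℝ := (m:ℝ) * π / (2 * n) with hx
  have hs : 0 < Real.sin x := sinx_pos n m hm0 hm
  have ht := tele2 n x
  have h2 : 2 * (n:ℝ) * x = (m:ℝ) * π := by rw [hx]; field_simp
  rw [h2, Real.sin_nat_mul_pi_sub, ← Finset.mul_sum] at ht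
  have h3 : (2 * Real.sin x) ≠ 0 := by positivity
  rcases Nat.even_or_odd m with he | ho
  · rw [if_pos he]
    rw [he.neg_one_pow] at ht
    have : (2 * Real.sin x) * ∑ k ∈ Finset.range n, Real.cos (2 * (k:ℝ) * x) = 0 := by
      rw [ht]; ring
    exact (mul_eq_zero.mp this).resolve_left h3
  · rw [if_neg (Nat.not_even_iff_odd.mpr ho)]
    rw [ho.neg_one_pow] at ht
    have : (2 * Real.sin x) * ∑ k ∈ Finset.range n, Real.cos (2 * (k:ℝ) * x)
        = (2 * Real.sin x) * 1 := by rw [ht]; ring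
    exact mul_left_cancel₀ h3 this

lemma key2' (n m : ℕ) (hm0 : 0 < m) (hm : m < 2 * n) :
    ∑ k ∈ Finset.range (n - 1), Real.cos (2 * ((k:ℝ) + 1) * ((m:ℝ) * π / (2 * n)))
      = (if Even m then 0 else 1) - 1 := by
  have hn : 1 ≤ n := by omega
  have h := key2 n m hm0 hm
  obtain ⟨n', rfl⟩ : ∃ n', n = n' + 1 := ⟨n - 1, by omega⟩
  rw [Finset.sum_range_succ'] at h
  push_cast at h ⊢
  simp only [mul_zero, zero_mul, Real.cos_zero] at h
  linarith

lemma cossum (n a b : ℕ) (hn : 2 ≤ n) (ha : a ≤ n - 1) (hb : b ≤ a) :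
    ∑ k ∈ Finset.range n, Real.cos ((2 * (k:ℝ) + 1) * ((a:ℝ) * π / (2 * n))) *
        Real.cos ((2 * (k:ℝ) + 1) * ((b:ℝ) * π / (2 * n)))
      = if a = b then (if a = 0 then (n:ℝ) else (n:ℝ) / 2) else 0 := by
  have hpt : ∀ k : ℕ,
      Real.cos ((2 * (k:ℝ) + 1) * ((a:ℝ) * π / (2 * n))) *
        Real.cos ((2 * (k:ℝ) + 1) * ((b:ℝ) * π / (2 * n)))
      = (Real.cos ((2 * (k:ℝ) + 1) * ((((a - b : ℕ)):ℝ) * π / (2 * n)))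
          + Real.cos ((2 * (k:ℝ) + 1) * ((((a + b : ℕ)):ℝ) * π / (2 * n)))) / 2 := by
    intro k
    have e1 : (2 * (k:ℝ) + 1) * ((((a - b : ℕ)):ℝ) * π / (2 * n))
        = (2 * (k:ℝ) + 1) * ((a:ℝ) * π / (2 * n)) - (2 * (k:ℝ) + 1) * ((b:ℝ) * π / (2 * n)) := by
      rw [Nat.cast_sub hb]; ring
    have e2 : (2 * (k:ℝ) + 1) * ((((a + b : ℕ)):ℝ) * π / (2 * n))
        = (2 * (k:ℝ) + 1) * ((a:ℝ) * π / (2 * n)) + (2 * (k:ℝ) + 1) * ((b:ℝ) * π / (2 * n)) := by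
      push_cast; ring
    rw [e1, e2, Real.cos_sub, Real.cos_add]; ring
  rw [Finset.sum_congr rfl (fun k _ => hpt k)]
  rw [← Finset.sum_div, Finset.sum_add_distrib]
  by_cases hab : a = b
  · subst hab
    simp only [Nat.sub_self, Nat.cast_zero, zero_mul, zero_div, mul_zero, Real.cos_zero]
    rw [Finset.sum_const, Finset.card_range]; simp only [if_true]
    by_cases ha0 : a = 0
    · subst ha0
      simp
    · rw [if_neg ha0]
      rw [key1 n (a + a) (by omega) (by omega)]
      simp
  · rw [if_neg hab]
    have hba : b < a := by omega
    rw [key1 n (a - b) (by omega) (by omega), key1 n (a + b) (by omega) (by omega)]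
    norm_num

lemma sinsum (n a b : ℕ) (hn : 2 ≤ n) (ha : a ≤ n - 1) (hb1 : 1 ≤ b) (hb : b ≤ a) :
    ∑ l ∈ Finset.range (n - 1),
        Real.sin (2 * ((l:ℝ) + 1) * ((a:ℝ) * π / (2 * n))) *
          Real.sin (2 * ((l:ℝ) + 1) * ((b:ℝ) * π / (2 * n)))
      = if a = b then (n:ℝ) / 2 else 0 := by
  have hpt : ∀ l : ℕ,
      Real.sin (2 * ((l:ℝ) + 1) * ((a:ℝ) * π / (2 * n))) *
        Real.sin (2 * ((l:ℝ) + 1) * ((b:ℝ) * π / (2 * n)))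
      = (Real.cos (2 * ((l:ℝ) + 1) * ((((a - b : ℕ)):ℝ) * π / (2 * n)))
          - Real.cos (2 * ((l:ℝ) + 1) * ((((a + b : ℕ)):ℝ) * π / (2 * n)))) / 2 := by
    intro l
    have e1 : 2 * ((l:ℝ) + 1) * ((((a - b : ℕ)):ℝ) * π / (2 * n))
        = 2 * ((l:ℝ) + 1) * ((a:ℝ) * π / (2 * n)) - 2 * ((l:ℝ) + 1) * ((b:ℝ) * π / (2 * n)) := by
      rw [Nat.cast_sub hb]; ring
    have e2 : 2 * ((l:ℝ) + 1) * ((((a + b : ℕ)):ℝ) * π / (2 * n))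
        = 2 * ((l:ℝ) + 1) * ((a:ℝ) * π / (2 * n)) + 2 * ((l:ℝ) + 1) * ((b:ℝ) * π / (2 * n)) := by
      push_cast; ring
    rw [e1, e2, Real.cos_sub, Real.cos_add]; ring
  rw [Finset.sum_congr rfl (fun l _ => hpt l)]
  rw [← Finset.sum_div, Finset.sum_sub_distrib]
  by_cases hab : a = b
  · subst hab
    simp only [Nat.sub_self, Nat.cast_zero, zero_mul, zero_div, mul_zero, Real.cos_zero]
    rw [Finset.sum_const, Finset.card_range]; simp only [if_true]
    rw [key2' n (a + a) (by omega) (by omega)]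
    rw [if_pos (Even.add_self a)]
    have hcast : ((n - 1 : ℕ):ℝ) = (n:ℝ) - 1 := by
      rw [Nat.cast_sub (by omega)]; norm_num
    rw [nsmul_eq_mul, hcast]
    ring
  · rw [if_neg hab]
    have hba : b < a := by omega
    rw [key2' n (a - b) (by omega) (by omega), key2' n (a + b) (by omega) (by omega)]
    have hpar : (Even (a - b)) ↔ (Even (a + b)) := by
      rw [Nat.even_sub hb, Nat.even_add]
    by_cases he : Even (a - b)
    · rw [if_pos he, if_pos (hpar.mp he)]; ring
    · rw [if_neg he, if_neg (fun hc => he (hpar.mpr hc))]; ring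

lemma svec_zero (n : ℕ) (l : Fin (n - 1)) : svec n 0 l = 0 := by
  simp [svec]

lemma cdot_base (n : ℕ) (hn : 2 ≤ n) (a b : ℕ) (ha : a ≤ n - 1) (hb : b ≤ a) :
    ∑ k : Fin n, cvec n a k * cvec n b k = if a = b then (n:ℝ) / 2 else 0 := by
  have h0 := Fin.sum_univ_eq_sum_range (fun j : ℕ =>
      ((if a = 0 then 1 / Real.sqrt 2 else 1) *
          Real.cos ((((2 * j + 1) * a : ℕ):ℝ) * π / (2 * (n:ℝ)))) *
      ((if b = 0 then 1 / Real.sqrt 2 else 1) *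
          Real.cos ((((2 * j + 1) * b : ℕ):ℝ) * π / (2 * (n:ℝ))))) n
  calc ∑ k : Fin n, cvec n a k * cvec n b k
      = ∑ j ∈ Finset.range n,
          ((if a = 0 then 1 / Real.sqrt 2 else 1) *
              Real.cos ((((2 * j + 1) * a : ℕ):ℝ) * π / (2 * (n:ℝ)))) *
          ((if b = 0 then 1 / Real.sqrt 2 else 1) *
              Real.cos ((((2 * j + 1) * b : ℕ):ℝ) * π / (2 * (n:ℝ)))) := h0
    _ = ((if a = 0 then 1 / Real.sqrt 2 else 1) * (if b = 0 then 1 / Real.sqrt 2 else 1)) *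
          ∑ j ∈ Finset.range n,
            Real.cos ((2 * (j:ℝ) + 1) * ((a:ℝ) * π / (2 * n))) *
              Real.cos ((2 * (j:ℝ) + 1) * ((b:ℝ) * π / (2 * n))) := by
        rw [Finset.mul_sum]
        apply Finset.sum_congr rfl
        intro j _
        have e1 : (((2 * j + 1) * a : ℕ):ℝ) * π / (2 * (n:ℝ))
            = (2 * (j:ℝ) + 1) * ((a:ℝ) * π / (2 * n)) := by push_cast; ring
        have e2 : (((2 * j + 1) * b : ℕ):ℝ) * π / (2 * (n:ℝ))
            = (2 * (j:ℝ) + 1) * ((b:ℝ) * π / (2 * n)) := by push_cast; ring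
        rw [e1, e2]; ring
    _ = if a = b then (n:ℝ) / 2 else 0 := by
        rw [cossum n a b hn ha hb]
        split_ifs
        all_goals try (exfalso; omega)
        all_goals try ring
        all_goals field_simp
        all_goals norm_num [Real.sq_sqrt]

lemma cdot_delta (n : ℕ) (hn : 2 ≤ n) (i i0 : ℕ) (hi : i < n) (hi0 : i0 < n) :
    ∑ k : Fin n, cvec n i k * cvec n i0 k = if i = i0 then (n:ℝ) / 2 else 0 := by
  rcases le_total i0 i with h | h
  · exact cdot_base n hn i i0 (by omega) h
  · have hb := cdot_base n hn i0 i (by omega) h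
    calc ∑ k : Fin n, cvec n i k * cvec n i0 k
        = ∑ k : Fin n, cvec n i0 k * cvec n i k :=
          Finset.sum_congr rfl fun k _ => mul_comm _ _
      _ = if i0 = i then (n:ℝ) / 2 else 0 := hb
      _ = if i = i0 then (n:ℝ) / 2 else 0 := by
          by_cases h' : i = i0
          · simp [h']
          · rw [if_neg h', if_neg (fun hc => h' hc.symm)]

lemma sdot_base (n : ℕ) (hn : 2 ≤ n) (a b : ℕ) (ha : a ≤ n - 1) (hb1 : 1 ≤ b) (hb : b ≤ a) :
    ∑ l : Fin (n - 1), svec n a l * svec n b l = if a = b then (n:ℝ) / 2 else 0 := by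
  have h0 := Fin.sum_univ_eq_sum_range (fun j : ℕ =>
      Real.sin ((((j + 1) * a : ℕ):ℝ) * π / (n:ℝ)) *
        Real.sin ((((j + 1) * b : ℕ):ℝ) * π / (n:ℝ))) (n - 1)
  calc ∑ l : Fin (n - 1), svec n a l * svec n b l
      = ∑ j ∈ Finset.range (n - 1),
          Real.sin ((((j + 1) * a : ℕ):ℝ) * π / (n:ℝ)) *
            Real.sin ((((j + 1) * b : ℕ):ℝ) * π / (n:ℝ)) := h0
    _ = ∑ j ∈ Finset.range (n - 1),
          Real.sin (2 * ((j:ℝ) + 1) * ((a:ℝ) * π / (2 * n))) *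
            Real.sin (2 * ((j:ℝ) + 1) * ((b:ℝ) * π / (2 * n))) := by
        apply Finset.sum_congr rfl
        intro j _
        have e1 : (((j + 1) * a : ℕ):ℝ) * π / (n:ℝ)
            = 2 * ((j:ℝ) + 1) * ((a:ℝ) * π / (2 * n)) := by push_cast; ring
        have e2 : (((j + 1) * b : ℕ):ℝ) * π / (n:ℝ)
            = 2 * ((j:ℝ) + 1) * ((b:ℝ) * π / (2 * n)) := by push_cast; ring
        rw [e1, e2]
    _ = if a = b then (n:ℝ) / 2 else 0 := sinsum n a b hn ha hb1 hb

lemma sdot_delta (n : ℕ) (hn : 2 ≤ n) (j j0 : ℕ) (hj : j ≤ n - 1) (hj01 : 1 ≤ j0)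
    (hj0 : j0 ≤ n - 1) :
    ∑ l : Fin (n - 1), svec n j l * svec n j0 l = if j = j0 then (n:ℝ) / 2 else 0 := by
  by_cases hjz : j = 0
  · subst hjz
    rw [if_neg (by omega)]
    simp [svec_zero]
  · rcases le_total j0 j with h | h
    · exact sdot_base n hn j j0 hj hj01 h
    · have hb := sdot_base n hn j0 j hj0 (by omega) h
      calc ∑ l : Fin (n - 1), svec n j l * svec n j0 l
          = ∑ l : Fin (n - 1), svec n j0 l * svec n j l :=
            Finset.sum_congr rfl fun l _ => mul_comm _ _
        _ = if j0 = j then (n:ℝ) / 2 else 0 := hb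
        _ = if j = j0 then (n:ℝ) / 2 else 0 := by
            by_cases h' : j = j0
            · simp [h']
            · rw [if_neg h', if_neg (fun hc => h' hc.symm)]

lemma pair_sum {ι p q : Type*} [Fintype ι] [Fintype p] [Fintype q]
    (M : ι → Matrix p q ℝ) (h : ∑ e, M e = 0) (u : p → ℝ) (v : q → ℝ) :
    ∑ e, ∑ k, ∑ l, M e k l * u k * v l = 0 := by
  rw [Finset.sum_comm]
  refine Finset.sum_eq_zero fun k _ => ?_
  rw [Finset.sum_comm]
  refine Finset.sum_eq_zero fun l _ => ?_
  have h2 : ∑ e, M e k l = 0 := by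
    have := congrFun (congrFun h k) l
    simpa [Matrix.sum_apply] using this
  calc ∑ e, M e k l * u k * v l = (∑ e, M e k l) * (u k * v l) := by
        rw [Finset.sum_mul]
        exact Finset.sum_congr rfl fun e _ => by ring
    _ = 0 := by rw [h2, zero_mul]

lemma pair_rank1 {p q : Type*} [Fintype p] [Fintype q] (a : ℝ) (x u : p → ℝ) (y v : q → ℝ) :
    ∑ k, ∑ l, (a • Matrix.vecMulVec x y) k l * u k * v l
      = a * ((∑ k, x k * u k) * (∑ l, y l * v l)) := by
  have hk : ∀ k, ∑ l, (a • Matrix.vecMulVec x y) k l * u k * v l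
      = (a * (x k * u k)) * ∑ l, y l * v l := by
    intro k
    rw [Finset.mul_sum]
    exact Finset.sum_congr rfl fun l _ => by
      simp only [Matrix.smul_apply, Matrix.vecMulVec_apply, smul_eq_mul]; ring
  rw [Finset.sum_congr rfl fun k _ => hk k, ← Finset.sum_mul, ← Finset.mul_sum, mul_assoc]

set_option maxHeartbeats 2000000 in
/-- Theorem 3.1, completeness: the family of the `n²-1` divergence-free pairs together
with the `(n-1)²` curl-free pairs consists of `2n(n-1)` elements, is linearly
independent, and spans `ℝ^{n×(n-1)} × ℝ^{(n-1)×n}`, hence forms a basis of this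
`2n(n-1)`-dimensional space. -/
theorem stmt9 (n : ℕ) (hn : 2 ≤ n) :
    Fintype.card (eigIdx n) = 2 * n * (n - 1) ∧
    LinearIndependent ℝ (eigFam n) ∧
    Submodule.span ℝ (Set.range (eigFam n)) = ⊤ := by
  have hn0 : 0 < n := by omega
  -- cardinality
  have hone : Fintype.card {p : Fin n × Fin n // (p.1 : ℕ) = 0 ∧ (p.2 : ℕ) = 0} = 1 := by
    rw [Fintype.card_eq_one_iff]
    refine ⟨⟨(⟨0, hn0⟩, ⟨0, hn0⟩), rfl, rfl⟩, ?_⟩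
    rintro ⟨⟨p1, p2⟩, hp1, hp2⟩
    exact Subtype.ext (Prod.ext (Fin.ext hp1) (Fin.ext hp2))
  have hcard : Fintype.card (eigIdx n) = 2 * n * (n - 1) := by
    have h1 : Fintype.card (eigIdx n)
        = Fintype.card {p : Fin n × Fin n // ¬((p.1 : ℕ) = 0 ∧ (p.2 : ℕ) = 0)}
          + Fintype.card (Fin (n - 1) × Fin (n - 1)) := Fintype.card_sum
    have h2 : Fintype.card {p : Fin n × Fin n // ¬((p.1 : ℕ) = 0 ∧ (p.2 : ℕ) = 0)}
        = n * n - 1 := by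
      rw [Fintype.card_subtype_compl, hone]
      simp [Fintype.card_prod]
    rw [h1, h2]
    simp only [Fintype.card_prod, Fintype.card_fin]
    have hnn : 1 ≤ n * n := Nat.one_le_iff_ne_zero.mpr (by positivity)
    zify [hnn, (by omega : 1 ≤ n)]
    ring

  have hli : LinearIndependent ℝ (eigFam n) := by
    rw [Fintype.linearIndependent_iff]
    intro g hg
    have hg1 : ∑ e : eigIdx n, g e • (eigFam n e).1 = 0 := by
      have h := congrArg Prod.fst hg
      simpa [Prod.fst_sum] using h
    have hg2 : ∑ e : eigIdx n, g e • (eigFam n e).2 = 0 := by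
      have h := congrArg Prod.snd hg
      simpa [Prod.snd_sum] using h
    have tauneg : ∀ m : ℕ, 0 < m → m < 2 * n → tau n m < 0 := by
      intro m h1 h2
      have hs := sinx_pos n m h1 h2
      unfold tau
      linarith
    have taunz : ∀ m : ℕ, 0 < m → m < 2 * n → tau n m ≠ 0 :=
      fun m a b => ne_of_lt (tauneg m a b)
    have sigpos : ∀ m : ℕ, 0 < sigma n m := by
      intro m
      unfold sigma
      have := Real.neg_one_le_cos ((m:ℝ) * Real.pi / n)
      linarith
    have hNpos : (0:ℝ) < (n:ℝ) / 2 * ((n:ℝ) / 2) := by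
      have : (0:ℝ) < n := by exact_mod_cast hn0
      positivity
    have master1 : ∀ (u : Fin n → ℝ) (v : Fin (n - 1) → ℝ),
        (∑ p : {p : Fin n × Fin n // ¬((p.1 : ℕ) = 0 ∧ (p.2 : ℕ) = 0)},
            g (Sum.inl p) * (tau n (p.1.2 : ℕ) * sigma n (p.1.1 : ℕ)) *
              ((∑ k, cvec n (p.1.1 : ℕ) k * u k) * (∑ l, svec n (p.1.2 : ℕ) l * v l)))
        + (∑ q : Fin (n - 1) × Fin (n - 1),
            g (Sum.inr q) * tau n ((q.1 : ℕ) + 1) *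
              ((∑ k, cvec n ((q.1 : ℕ) + 1) k * u k) *
                (∑ l, svec n ((q.2 : ℕ) + 1) l * v l))) = 0 := by
      intro u v
      have h1 := pair_sum (fun e : eigIdx n => g e • (eigFam n e).1) hg1 u v
      have hterm1 : ∀ p : {p : Fin n × Fin n // ¬((p.1 : ℕ) = 0 ∧ (p.2 : ℕ) = 0)},
          ∑ k, ∑ l, (g (Sum.inl p) • (eigFam n (Sum.inl p)).1) k l * u k * v l
          = g (Sum.inl p) * (tau n (p.1.2 : ℕ) * sigma n (p.1.1 : ℕ)) *
              ((∑ k, cvec n (p.1.1 : ℕ) k * u k) * (∑ l, svec n (p.1.2 : ℕ) l * v l)) := by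
        intro p
        have he : (g (Sum.inl p) • (eigFam n (Sum.inl p)).1)
            = (g (Sum.inl p) * (tau n (p.1.2 : ℕ) * sigma n (p.1.1 : ℕ))) •
                Matrix.vecMulVec (cvec n (p.1.1 : ℕ)) (svec n (p.1.2 : ℕ)) := by
          rw [show (eigFam n (Sum.inl p)).1
              = (tau n (p.1.2 : ℕ) * sigma n (p.1.1 : ℕ)) •
                  Matrix.vecMulVec (cvec n (p.1.1 : ℕ)) (svec n (p.1.2 : ℕ)) from rfl,
            smul_smul]
        rw [he, pair_rank1]
      have hterm2 : ∀ q : Fin (n - 1) × Fin (n - 1),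
          ∑ k, ∑ l, (g (Sum.inr q) • (eigFam n (Sum.inr q)).1) k l * u k * v l
          = g (Sum.inr q) * tau n ((q.1 : ℕ) + 1) *
              ((∑ k, cvec n ((q.1 : ℕ) + 1) k * u k) *
                (∑ l, svec n ((q.2 : ℕ) + 1) l * v l)) := by
        intro q
        have he : (g (Sum.inr q) • (eigFam n (Sum.inr q)).1)
            = (g (Sum.inr q) * tau n ((q.1 : ℕ) + 1)) •
                Matrix.vecMulVec (cvec n ((q.1 : ℕ) + 1)) (svec n ((q.2 : ℕ) + 1)) := by
          rw [show (eigFam n (Sum.inr q)).1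
              = tau n ((q.1 : ℕ) + 1) •
                  Matrix.vecMulVec (cvec n ((q.1 : ℕ) + 1)) (svec n ((q.2 : ℕ) + 1)) from rfl,
            smul_smul]
        rw [he, pair_rank1]
      calc (∑ p : {p : Fin n × Fin n // ¬((p.1 : ℕ) = 0 ∧ (p.2 : ℕ) = 0)},
            g (Sum.inl p) * (tau n (p.1.2 : ℕ) * sigma n (p.1.1 : ℕ)) *
              ((∑ k, cvec n (p.1.1 : ℕ) k * u k) * (∑ l, svec n (p.1.2 : ℕ) l * v l)))
          + (∑ q : Fin (n - 1) × Fin (n - 1),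
            g (Sum.inr q) * tau n ((q.1 : ℕ) + 1) *
              ((∑ k, cvec n ((q.1 : ℕ) + 1) k * u k) *
                (∑ l, svec n ((q.2 : ℕ) + 1) l * v l)))
          = (∑ p : {p : Fin n × Fin n // ¬((p.1 : ℕ) = 0 ∧ (p.2 : ℕ) = 0)},
              ∑ k, ∑ l, (g (Sum.inl p) • (eigFam n (Sum.inl p)).1) k l * u k * v l)
            + (∑ q : Fin (n - 1) × Fin (n - 1),
              ∑ k, ∑ l, (g (Sum.inr q) • (eigFam n (Sum.inr q)).1) k l * u k * v l) := by
            congr 1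
            · exact Finset.sum_congr rfl fun p _ => (hterm1 p).symm
            · exact Finset.sum_congr rfl fun q _ => (hterm2 q).symm
        _ = ∑ e : {p : Fin n × Fin n // ¬((p.1 : ℕ) = 0 ∧ (p.2 : ℕ) = 0)}
              ⊕ (Fin (n - 1) × Fin (n - 1)),
              ∑ k, ∑ l, (g e • (eigFam n e).1) k l * u k * v l :=
            (Fintype.sum_sum_type (f := fun e : {p : Fin n × Fin n // ¬((p.1 : ℕ) = 0 ∧ (p.2 : ℕ) = 0)} ⊕ (Fin (n - 1) × Fin (n - 1)) => ∑ k, ∑ l, (g e • (eigFam n e).1) k l * u k * v l)).symm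
        _ = 0 := h1
    have master2 : ∀ (u : Fin (n - 1) → ℝ) (v : Fin n → ℝ),
        (∑ p : {p : Fin n × Fin n // ¬((p.1 : ℕ) = 0 ∧ (p.2 : ℕ) = 0)},
            g (Sum.inl p) * (-(tau n (p.1.1 : ℕ) * sigma n (p.1.2 : ℕ))) *
              ((∑ l, svec n (p.1.1 : ℕ) l * u l) * (∑ k, cvec n (p.1.2 : ℕ) k * v k)))
        + (∑ q : Fin (n - 1) × Fin (n - 1),
            g (Sum.inr q) * tau n ((q.2 : ℕ) + 1) *
              ((∑ l, svec n ((q.1 : ℕ) + 1) l * u l) *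
                (∑ k, cvec n ((q.2 : ℕ) + 1) k * v k))) = 0 := by
      intro u v
      have h1 := pair_sum (fun e : eigIdx n => g e • (eigFam n e).2) hg2 u v
      have hterm1 : ∀ p : {p : Fin n × Fin n // ¬((p.1 : ℕ) = 0 ∧ (p.2 : ℕ) = 0)},
          ∑ l, ∑ k, (g (Sum.inl p) • (eigFam n (Sum.inl p)).2) l k * u l * v k
          = g (Sum.inl p) * (-(tau n (p.1.1 : ℕ) * sigma n (p.1.2 : ℕ))) *
              ((∑ l, svec n (p.1.1 : ℕ) l * u l) * (∑ k, cvec n (p.1.2 : ℕ) k * v k)) := by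
        intro p
        have he : (g (Sum.inl p) • (eigFam n (Sum.inl p)).2)
            = (g (Sum.inl p) * (-(tau n (p.1.1 : ℕ) * sigma n (p.1.2 : ℕ)))) •
                Matrix.vecMulVec (svec n (p.1.1 : ℕ)) (cvec n (p.1.2 : ℕ)) := by
          rw [show (eigFam n (Sum.inl p)).2
              = (-(tau n (p.1.1 : ℕ) * sigma n (p.1.2 : ℕ))) •
                  Matrix.vecMulVec (svec n (p.1.1 : ℕ)) (cvec n (p.1.2 : ℕ)) from rfl,
            smul_smul]
        rw [he, pair_rank1]
      have hterm2 : ∀ q : Fin (n - 1) × Fin (n - 1),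
          ∑ l, ∑ k, (g (Sum.inr q) • (eigFam n (Sum.inr q)).2) l k * u l * v k
          = g (Sum.inr q) * tau n ((q.2 : ℕ) + 1) *
              ((∑ l, svec n ((q.1 : ℕ) + 1) l * u l) *
                (∑ k, cvec n ((q.2 : ℕ) + 1) k * v k)) := by
        intro q
        have he : (g (Sum.inr q) • (eigFam n (Sum.inr q)).2)
            = (g (Sum.inr q) * tau n ((q.2 : ℕ) + 1)) •
                Matrix.vecMulVec (svec n ((q.1 : ℕ) + 1)) (cvec n ((q.2 : ℕ) + 1)) := by
          rw [show (eigFam n (Sum.inr q)).2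
              = tau n ((q.2 : ℕ) + 1) •
                  Matrix.vecMulVec (svec n ((q.1 : ℕ) + 1)) (cvec n ((q.2 : ℕ) + 1)) from rfl,
            smul_smul]
        rw [he, pair_rank1]
      calc (∑ p : {p : Fin n × Fin n // ¬((p.1 : ℕ) = 0 ∧ (p.2 : ℕ) = 0)},
            g (Sum.inl p) * (-(tau n (p.1.1 : ℕ) * sigma n (p.1.2 : ℕ))) *
              ((∑ l, svec n (p.1.1 : ℕ) l * u l) * (∑ k, cvec n (p.1.2 : ℕ) k * v k)))
          + (∑ q : Fin (n - 1) × Fin (n - 1),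
            g (Sum.inr q) * tau n ((q.2 : ℕ) + 1) *
              ((∑ l, svec n ((q.1 : ℕ) + 1) l * u l) *
                (∑ k, cvec n ((q.2 : ℕ) + 1) k * v k)))
          = (∑ p : {p : Fin n × Fin n // ¬((p.1 : ℕ) = 0 ∧ (p.2 : ℕ) = 0)},
              ∑ l, ∑ k, (g (Sum.inl p) • (eigFam n (Sum.inl p)).2) l k * u l * v k)
            + (∑ q : Fin (n - 1) × Fin (n - 1),
              ∑ l, ∑ k, (g (Sum.inr q) • (eigFam n (Sum.inr q)).2) l k * u l * v k) := by
            congr 1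
            · exact Finset.sum_congr rfl fun p _ => (hterm1 p).symm
            · exact Finset.sum_congr rfl fun q _ => (hterm2 q).symm
        _ = ∑ e : {p : Fin n × Fin n // ¬((p.1 : ℕ) = 0 ∧ (p.2 : ℕ) = 0)}
              ⊕ (Fin (n - 1) × Fin (n - 1)),
              ∑ l, ∑ k, (g e • (eigFam n e).2) l k * u l * v k :=
            (Fintype.sum_sum_type (f := fun e : {p : Fin n × Fin n // ¬((p.1 : ℕ) = 0 ∧ (p.2 : ℕ) = 0)} ⊕ (Fin (n - 1) × Fin (n - 1)) => ∑ l, ∑ k, (g e • (eigFam n e).2) l k * u l * v k)).symm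
        _ = 0 := h1
    have EV1 : ∀ (i0 j0 : Fin n) (hj0 : 1 ≤ (j0 : ℕ)),
        g (Sum.inl ⟨(i0, j0), fun hc => by have h2 : (j0 : ℕ) = 0 := hc.2; omega⟩) *
            (tau n (j0 : ℕ) * sigma n (i0 : ℕ)) * ((n:ℝ) / 2 * ((n:ℝ) / 2))
        + (if hi : 1 ≤ (i0 : ℕ) then
            g (Sum.inr (⟨(i0 : ℕ) - 1, by have := i0.isLt; omega⟩,
                ⟨(j0 : ℕ) - 1, by have := j0.isLt; omega⟩)) *
              tau n (i0 : ℕ) * ((n:ℝ) / 2 * ((n:ℝ) / 2))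
          else 0) = 0 := by
      intro i0 j0 hj0
      have hj0n : (j0 : ℕ) ≤ n - 1 := by have := j0.isLt; omega
      have H := master1 (cvec n (i0 : ℕ)) (svec n (j0 : ℕ))
      have hzdiv : ∀ p : {p : Fin n × Fin n // ¬((p.1 : ℕ) = 0 ∧ (p.2 : ℕ) = 0)},
          p ≠ ⟨(i0, j0), fun hc => by have h2 : (j0 : ℕ) = 0 := hc.2; omega⟩ →
          g (Sum.inl p) * (tau n (p.1.2 : ℕ) * sigma n (p.1.1 : ℕ)) *
              ((∑ k, cvec n (p.1.1 : ℕ) k * cvec n (i0 : ℕ) k) *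
                (∑ l, svec n (p.1.2 : ℕ) l * svec n (j0 : ℕ) l)) = 0 := by
        intro p hp
        have hne : (p.1.1 : ℕ) ≠ (i0 : ℕ) ∨ (p.1.2 : ℕ) ≠ (j0 : ℕ) := by
          by_contra hc
          push_neg at hc
          exact hp (Subtype.ext (Prod.ext (Fin.ext hc.1) (Fin.ext hc.2)))
        rcases hne with h | h
        · rw [cdot_delta n hn (p.1.1 : ℕ) (i0 : ℕ) p.1.1.isLt i0.isLt, if_neg h]
          ring
        · rw [sdot_delta n hn (p.1.2 : ℕ) (j0 : ℕ) (by have := p.1.2.isLt; omega) hj0 hj0n,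
            if_neg h]
          ring
      have hdiv : (∑ p : {p : Fin n × Fin n // ¬((p.1 : ℕ) = 0 ∧ (p.2 : ℕ) = 0)},
            g (Sum.inl p) * (tau n (p.1.2 : ℕ) * sigma n (p.1.1 : ℕ)) *
              ((∑ k, cvec n (p.1.1 : ℕ) k * cvec n (i0 : ℕ) k) *
                (∑ l, svec n (p.1.2 : ℕ) l * svec n (j0 : ℕ) l)))
          = g (Sum.inl ⟨(i0, j0), fun hc => by have h2 : (j0 : ℕ) = 0 := hc.2; omega⟩) *
              (tau n (j0 : ℕ) * sigma n (i0 : ℕ)) * ((n:ℝ) / 2 * ((n:ℝ) / 2)) := by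
        calc (∑ p : {p : Fin n × Fin n // ¬((p.1 : ℕ) = 0 ∧ (p.2 : ℕ) = 0)},
            g (Sum.inl p) * (tau n (p.1.2 : ℕ) * sigma n (p.1.1 : ℕ)) *
              ((∑ k, cvec n (p.1.1 : ℕ) k * cvec n (i0 : ℕ) k) *
                (∑ l, svec n (p.1.2 : ℕ) l * svec n (j0 : ℕ) l)))
            = g (Sum.inl ⟨(i0, j0), fun hc => by have h2 : (j0 : ℕ) = 0 := hc.2; omega⟩) *
                (tau n (j0 : ℕ) * sigma n (i0 : ℕ)) *
                ((∑ k, cvec n (i0 : ℕ) k * cvec n (i0 : ℕ) k) *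
                  (∑ l, svec n (j0 : ℕ) l * svec n (j0 : ℕ) l)) :=
              Fintype.sum_eq_single _ hzdiv
          _ = g (Sum.inl ⟨(i0, j0), fun hc => by have h2 : (j0 : ℕ) = 0 := hc.2; omega⟩) *
              (tau n (j0 : ℕ) * sigma n (i0 : ℕ)) * ((n:ℝ) / 2 * ((n:ℝ) / 2)) := by
              rw [cdot_delta n hn (i0 : ℕ) (i0 : ℕ) i0.isLt i0.isLt, if_pos rfl,
                sdot_delta n hn (j0 : ℕ) (j0 : ℕ) hj0n hj0 hj0n, if_pos rfl]
      by_cases hi : 1 ≤ (i0 : ℕ)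
      · have hzcurl : ∀ q : Fin (n - 1) × Fin (n - 1),
            q ≠ (⟨(i0 : ℕ) - 1, by have := i0.isLt; omega⟩,
                ⟨(j0 : ℕ) - 1, by have := j0.isLt; omega⟩) →
            g (Sum.inr q) * tau n ((q.1 : ℕ) + 1) *
              ((∑ k, cvec n ((q.1 : ℕ) + 1) k * cvec n (i0 : ℕ) k) *
                (∑ l, svec n ((q.2 : ℕ) + 1) l * svec n (j0 : ℕ) l)) = 0 := by
          intro q hq
          have hne : (q.1 : ℕ) + 1 ≠ (i0 : ℕ) ∨ (q.2 : ℕ) + 1 ≠ (j0 : ℕ) := by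
            by_contra hc
            push_neg at hc
            exact hq (Prod.ext (Fin.ext (show ((q.1 : ℕ)) = (i0 : ℕ) - 1 by omega)) (Fin.ext (show ((q.2 : ℕ)) = (j0 : ℕ) - 1 by omega)))
          rcases hne with h | h
          · rw [cdot_delta n hn ((q.1 : ℕ) + 1) (i0 : ℕ) (by have := q.1.isLt; omega) i0.isLt,
              if_neg h]
            ring
          · rw [sdot_delta n hn ((q.2 : ℕ) + 1) (j0 : ℕ) (by have := q.2.isLt; omega) hj0 hj0n,
              if_neg h]
            ring
        have hcurl : (∑ q : Fin (n - 1) × Fin (n - 1),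
              g (Sum.inr q) * tau n ((q.1 : ℕ) + 1) *
                ((∑ k, cvec n ((q.1 : ℕ) + 1) k * cvec n (i0 : ℕ) k) *
                  (∑ l, svec n ((q.2 : ℕ) + 1) l * svec n (j0 : ℕ) l)))
            = g (Sum.inr (⟨(i0 : ℕ) - 1, by have := i0.isLt; omega⟩,
                ⟨(j0 : ℕ) - 1, by have := j0.isLt; omega⟩)) *
                tau n (i0 : ℕ) * ((n:ℝ) / 2 * ((n:ℝ) / 2)) := by
          calc (∑ q : Fin (n - 1) × Fin (n - 1),
              g (Sum.inr q) * tau n ((q.1 : ℕ) + 1) *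
                ((∑ k, cvec n ((q.1 : ℕ) + 1) k * cvec n (i0 : ℕ) k) *
                  (∑ l, svec n ((q.2 : ℕ) + 1) l * svec n (j0 : ℕ) l)))
              = g (Sum.inr (⟨(i0 : ℕ) - 1, by have := i0.isLt; omega⟩,
                  ⟨(j0 : ℕ) - 1, by have := j0.isLt; omega⟩)) *
                  tau n ((i0 : ℕ) - 1 + 1) *
                  ((∑ k, cvec n ((i0 : ℕ) - 1 + 1) k * cvec n (i0 : ℕ) k) *
                    (∑ l, svec n ((j0 : ℕ) - 1 + 1) l * svec n (j0 : ℕ) l)) :=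
                Fintype.sum_eq_single _ hzcurl
            _ = g (Sum.inr (⟨(i0 : ℕ) - 1, by have := i0.isLt; omega⟩,
                  ⟨(j0 : ℕ) - 1, by have := j0.isLt; omega⟩)) *
                  tau n (i0 : ℕ) * ((n:ℝ) / 2 * ((n:ℝ) / 2)) := by
                rw [show (i0 : ℕ) - 1 + 1 = (i0 : ℕ) from by omega,
                  show (j0 : ℕ) - 1 + 1 = (j0 : ℕ) from by omega,
                  cdot_delta n hn (i0 : ℕ) (i0 : ℕ) i0.isLt i0.isLt, if_pos rfl,
                  sdot_delta n hn (j0 : ℕ) (j0 : ℕ) hj0n hj0 hj0n, if_pos rfl]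
        rw [hdiv, hcurl] at H
        rw [dif_pos hi]
        exact H
      · have hcurl : (∑ q : Fin (n - 1) × Fin (n - 1),
              g (Sum.inr q) * tau n ((q.1 : ℕ) + 1) *
                ((∑ k, cvec n ((q.1 : ℕ) + 1) k * cvec n (i0 : ℕ) k) *
                  (∑ l, svec n ((q.2 : ℕ) + 1) l * svec n (j0 : ℕ) l))) = 0 := by
          refine Finset.sum_eq_zero fun q _ => ?_
          rw [cdot_delta n hn ((q.1 : ℕ) + 1) (i0 : ℕ) (by have := q.1.isLt; omega) i0.isLt,
            if_neg (by omega)]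
          ring
        rw [hdiv, hcurl] at H
        rw [dif_neg hi]
        exact H
    have EV2 : ∀ (i0 j0 : Fin n) (hi0 : 1 ≤ (i0 : ℕ)),
        g (Sum.inl ⟨(i0, j0), fun hc => by have h2 : (i0 : ℕ) = 0 := hc.1; omega⟩) *
            (-(tau n (i0 : ℕ) * sigma n (j0 : ℕ))) * ((n:ℝ) / 2 * ((n:ℝ) / 2))
        + (if hj : 1 ≤ (j0 : ℕ) then
            g (Sum.inr (⟨(i0 : ℕ) - 1, by have := i0.isLt; omega⟩,
                ⟨(j0 : ℕ) - 1, by have := j0.isLt; omega⟩)) *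
              tau n (j0 : ℕ) * ((n:ℝ) / 2 * ((n:ℝ) / 2))
          else 0) = 0 := by
      intro i0 j0 hi0
      have hi0n : (i0 : ℕ) ≤ n - 1 := by have := i0.isLt; omega
      have H := master2 (svec n (i0 : ℕ)) (cvec n (j0 : ℕ))
      have hzdiv : ∀ p : {p : Fin n × Fin n // ¬((p.1 : ℕ) = 0 ∧ (p.2 : ℕ) = 0)},
          p ≠ ⟨(i0, j0), fun hc => by have h2 : (i0 : ℕ) = 0 := hc.1; omega⟩ →
          g (Sum.inl p) * (-(tau n (p.1.1 : ℕ) * sigma n (p.1.2 : ℕ))) *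
              ((∑ l, svec n (p.1.1 : ℕ) l * svec n (i0 : ℕ) l) *
                (∑ k, cvec n (p.1.2 : ℕ) k * cvec n (j0 : ℕ) k)) = 0 := by
        intro p hp
        have hne : (p.1.1 : ℕ) ≠ (i0 : ℕ) ∨ (p.1.2 : ℕ) ≠ (j0 : ℕ) := by
          by_contra hc
          push_neg at hc
          exact hp (Subtype.ext (Prod.ext (Fin.ext hc.1) (Fin.ext hc.2)))
        rcases hne with h | h
        · rw [sdot_delta n hn (p.1.1 : ℕ) (i0 : ℕ) (by have := p.1.1.isLt; omega) hi0 hi0n,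
            if_neg h]
          ring
        · rw [cdot_delta n hn (p.1.2 : ℕ) (j0 : ℕ) p.1.2.isLt j0.isLt, if_neg h]
          ring
      have hdiv : (∑ p : {p : Fin n × Fin n // ¬((p.1 : ℕ) = 0 ∧ (p.2 : ℕ) = 0)},
            g (Sum.inl p) * (-(tau n (p.1.1 : ℕ) * sigma n (p.1.2 : ℕ))) *
              ((∑ l, svec n (p.1.1 : ℕ) l * svec n (i0 : ℕ) l) *
                (∑ k, cvec n (p.1.2 : ℕ) k * cvec n (j0 : ℕ) k)))
          = g (Sum.inl ⟨(i0, j0), fun hc => by have h2 : (i0 : ℕ) = 0 := hc.1; omega⟩) *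
              (-(tau n (i0 : ℕ) * sigma n (j0 : ℕ))) * ((n:ℝ) / 2 * ((n:ℝ) / 2)) := by
        calc (∑ p : {p : Fin n × Fin n // ¬((p.1 : ℕ) = 0 ∧ (p.2 : ℕ) = 0)},
            g (Sum.inl p) * (-(tau n (p.1.1 : ℕ) * sigma n (p.1.2 : ℕ))) *
              ((∑ l, svec n (p.1.1 : ℕ) l * svec n (i0 : ℕ) l) *
                (∑ k, cvec n (p.1.2 : ℕ) k * cvec n (j0 : ℕ) k)))
            = g (Sum.inl ⟨(i0, j0), fun hc => by have h2 : (i0 : ℕ) = 0 := hc.1; omega⟩) *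
                (-(tau n (i0 : ℕ) * sigma n (j0 : ℕ))) *
                ((∑ l, svec n (i0 : ℕ) l * svec n (i0 : ℕ) l) *
                  (∑ k, cvec n (j0 : ℕ) k * cvec n (j0 : ℕ) k)) :=
              Fintype.sum_eq_single _ hzdiv
          _ = g (Sum.inl ⟨(i0, j0), fun hc => by have h2 : (i0 : ℕ) = 0 := hc.1; omega⟩) *
              (-(tau n (i0 : ℕ) * sigma n (j0 : ℕ))) * ((n:ℝ) / 2 * ((n:ℝ) / 2)) := by
              rw [sdot_delta n hn (i0 : ℕ) (i0 : ℕ) hi0n hi0 hi0n, if_pos rfl,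
                cdot_delta n hn (j0 : ℕ) (j0 : ℕ) j0.isLt j0.isLt, if_pos rfl]
      by_cases hj : 1 ≤ (j0 : ℕ)
      · have hzcurl : ∀ q : Fin (n - 1) × Fin (n - 1),
            q ≠ (⟨(i0 : ℕ) - 1, by have := i0.isLt; omega⟩,
                ⟨(j0 : ℕ) - 1, by have := j0.isLt; omega⟩) →
            g (Sum.inr q) * tau n ((q.2 : ℕ) + 1) *
              ((∑ l, svec n ((q.1 : ℕ) + 1) l * svec n (i0 : ℕ) l) *
                (∑ k, cvec n ((q.2 : ℕ) + 1) k * cvec n (j0 : ℕ) k)) = 0 := by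
          intro q hq
          have hne : (q.1 : ℕ) + 1 ≠ (i0 : ℕ) ∨ (q.2 : ℕ) + 1 ≠ (j0 : ℕ) := by
            by_contra hc
            push_neg at hc
            exact hq (Prod.ext (Fin.ext (show ((q.1 : ℕ)) = (i0 : ℕ) - 1 by omega))
              (Fin.ext (show ((q.2 : ℕ)) = (j0 : ℕ) - 1 by omega)))
          rcases hne with h | h
          · rw [sdot_delta n hn ((q.1 : ℕ) + 1) (i0 : ℕ) (by have := q.1.isLt; omega) hi0 hi0n,
              if_neg h]
            ring
          · rw [cdot_delta n hn ((q.2 : ℕ) + 1) (j0 : ℕ) (by have := q.2.isLt; omega) j0.isLt,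
              if_neg h]
            ring
        have hcurl : (∑ q : Fin (n - 1) × Fin (n - 1),
              g (Sum.inr q) * tau n ((q.2 : ℕ) + 1) *
                ((∑ l, svec n ((q.1 : ℕ) + 1) l * svec n (i0 : ℕ) l) *
                  (∑ k, cvec n ((q.2 : ℕ) + 1) k * cvec n (j0 : ℕ) k)))
            = g (Sum.inr (⟨(i0 : ℕ) - 1, by have := i0.isLt; omega⟩,
                ⟨(j0 : ℕ) - 1, by have := j0.isLt; omega⟩)) *
                tau n (j0 : ℕ) * ((n:ℝ) / 2 * ((n:ℝ) / 2)) := by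
          calc (∑ q : Fin (n - 1) × Fin (n - 1),
              g (Sum.inr q) * tau n ((q.2 : ℕ) + 1) *
                ((∑ l, svec n ((q.1 : ℕ) + 1) l * svec n (i0 : ℕ) l) *
                  (∑ k, cvec n ((q.2 : ℕ) + 1) k * cvec n (j0 : ℕ) k)))
              = g (Sum.inr (⟨(i0 : ℕ) - 1, by have := i0.isLt; omega⟩,
                  ⟨(j0 : ℕ) - 1, by have := j0.isLt; omega⟩)) *
                  tau n ((j0 : ℕ) - 1 + 1) *
                  ((∑ l, svec n ((i0 : ℕ) - 1 + 1) l * svec n (i0 : ℕ) l) *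
                    (∑ k, cvec n ((j0 : ℕ) - 1 + 1) k * cvec n (j0 : ℕ) k)) :=
                Fintype.sum_eq_single _ hzcurl
            _ = g (Sum.inr (⟨(i0 : ℕ) - 1, by have := i0.isLt; omega⟩,
                  ⟨(j0 : ℕ) - 1, by have := j0.isLt; omega⟩)) *
                  tau n (j0 : ℕ) * ((n:ℝ) / 2 * ((n:ℝ) / 2)) := by
                rw [show (i0 : ℕ) - 1 + 1 = (i0 : ℕ) from by omega,
                  show (j0 : ℕ) - 1 + 1 = (j0 : ℕ) from by omega,
                  sdot_delta n hn (i0 : ℕ) (i0 : ℕ) hi0n hi0 hi0n, if_pos rfl,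
                  cdot_delta n hn (j0 : ℕ) (j0 : ℕ) j0.isLt j0.isLt, if_pos rfl]
        rw [hdiv, hcurl] at H
        rw [dif_pos hj]
        exact H
      · have hcurl : (∑ q : Fin (n - 1) × Fin (n - 1),
              g (Sum.inr q) * tau n ((q.2 : ℕ) + 1) *
                ((∑ l, svec n ((q.1 : ℕ) + 1) l * svec n (i0 : ℕ) l) *
                  (∑ k, cvec n ((q.2 : ℕ) + 1) k * cvec n (j0 : ℕ) k))) = 0 := by
          refine Finset.sum_eq_zero fun q _ => ?_
          rw [cdot_delta n hn ((q.2 : ℕ) + 1) (j0 : ℕ) (by have := q.2.isLt; omega) j0.isLt,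
            if_neg (by omega)]
          ring
        rw [hdiv, hcurl] at H
        rw [dif_neg hj]
        exact H

    have KEY : ∀ q : Fin (n - 1) × Fin (n - 1),
        g (Sum.inl ⟨(⟨(q.1 : ℕ) + 1, by have := q.1.isLt; omega⟩,
            ⟨(q.2 : ℕ) + 1, by have := q.2.isLt; omega⟩),
          fun hc => by have h2 : (q.2 : ℕ) + 1 = 0 := hc.2; omega⟩) = 0
        ∧ g (Sum.inr q) = 0 := by
      intro q
      have hA0 := EV1 ⟨(q.1 : ℕ) + 1, by have := q.1.isLt; omega⟩
        ⟨(q.2 : ℕ) + 1, by have := q.2.isLt; omega⟩ (Nat.le_add_left 1 _)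
      rw [dif_pos (Nat.le_add_left 1 ((q.1 : ℕ)) :
        1 ≤ ((⟨(q.1 : ℕ) + 1, by have := q.1.isLt; omega⟩ : Fin n) : ℕ))] at hA0
      have hB0 := EV2 ⟨(q.1 : ℕ) + 1, by have := q.1.isLt; omega⟩
        ⟨(q.2 : ℕ) + 1, by have := q.2.isLt; omega⟩ (Nat.le_add_left 1 _)
      rw [dif_pos (Nat.le_add_left 1 ((q.2 : ℕ)) :
        1 ≤ ((⟨(q.2 : ℕ) + 1, by have := q.2.isLt; omega⟩ : Fin n) : ℕ))] at hB0
      have hA : g (Sum.inl ⟨(⟨(q.1 : ℕ) + 1, by have := q.1.isLt; omega⟩,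
            ⟨(q.2 : ℕ) + 1, by have := q.2.isLt; omega⟩),
          fun hc => by have h2 : (q.2 : ℕ) + 1 = 0 := hc.2; omega⟩) *
            (tau n ((q.2 : ℕ) + 1) * sigma n ((q.1 : ℕ) + 1)) * ((n:ℝ) / 2 * ((n:ℝ) / 2))
          + g (Sum.inr q) * tau n ((q.1 : ℕ) + 1) * ((n:ℝ) / 2 * ((n:ℝ) / 2)) = 0 := hA0
      have hB : g (Sum.inl ⟨(⟨(q.1 : ℕ) + 1, by have := q.1.isLt; omega⟩,
            ⟨(q.2 : ℕ) + 1, by have := q.2.isLt; omega⟩),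
          fun hc => by have h2 : (q.2 : ℕ) + 1 = 0 := hc.2; omega⟩) *
            (-(tau n ((q.1 : ℕ) + 1) * sigma n ((q.2 : ℕ) + 1))) * ((n:ℝ) / 2 * ((n:ℝ) / 2))
          + g (Sum.inr q) * tau n ((q.2 : ℕ) + 1) * ((n:ℝ) / 2 * ((n:ℝ) / 2)) = 0 := hB0
      have ht1 : tau n ((q.1 : ℕ) + 1) < 0 :=
        tauneg _ (by omega) (by have := q.1.isLt; omega)
      have ht2 : tau n ((q.2 : ℕ) + 1) < 0 :=
        tauneg _ (by omega) (by have := q.2.isLt; omega)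
      have hs1 : 0 < sigma n ((q.1 : ℕ) + 1) := sigpos _
      have hs2 : 0 < sigma n ((q.2 : ℕ) + 1) := sigpos _
      have ha0 : g (Sum.inl ⟨(⟨(q.1 : ℕ) + 1, by have := q.1.isLt; omega⟩,
            ⟨(q.2 : ℕ) + 1, by have := q.2.isLt; omega⟩),
          fun hc => by have h2 : (q.2 : ℕ) + 1 = 0 := hc.2; omega⟩) = 0 := by
        have hcomb : g (Sum.inl ⟨(⟨(q.1 : ℕ) + 1, by have := q.1.isLt; omega⟩,
              ⟨(q.2 : ℕ) + 1, by have := q.2.isLt; omega⟩),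
            fun hc => by have h2 : (q.2 : ℕ) + 1 = 0 := hc.2; omega⟩) *
            ((tau n ((q.2 : ℕ) + 1) * tau n ((q.2 : ℕ) + 1) * sigma n ((q.1 : ℕ) + 1)
              + tau n ((q.1 : ℕ) + 1) * tau n ((q.1 : ℕ) + 1) * sigma n ((q.2 : ℕ) + 1)) *
              ((n:ℝ) / 2 * ((n:ℝ) / 2))) = 0 := by
          linear_combination tau n ((q.2 : ℕ) + 1) * hA - tau n ((q.1 : ℕ) + 1) * hB
        refine (mul_eq_zero.mp hcomb).resolve_right (ne_of_gt ?_)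
        have h1 : 0 < tau n ((q.2 : ℕ) + 1) * tau n ((q.2 : ℕ) + 1) :=
          mul_pos_of_neg_of_neg ht2 ht2
        have h2 : 0 < tau n ((q.1 : ℕ) + 1) * tau n ((q.1 : ℕ) + 1) :=
          mul_pos_of_neg_of_neg ht1 ht1
        exact mul_pos (add_pos (mul_pos h1 hs1) (mul_pos h2 hs2)) hNpos
      refine ⟨ha0, ?_⟩
      have hcomb : g (Sum.inr q) * (tau n ((q.1 : ℕ) + 1) * ((n:ℝ) / 2 * ((n:ℝ) / 2))) = 0 := by
        linear_combination hA - (tau n ((q.2 : ℕ) + 1) * sigma n ((q.1 : ℕ) + 1) *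
          ((n:ℝ) / 2 * ((n:ℝ) / 2))) * ha0
      exact (mul_eq_zero.mp hcomb).resolve_right
        (mul_ne_zero (ne_of_lt ht1) (ne_of_gt hNpos))
    intro e
    cases e with
    | inr q => exact (KEY q).2
    | inl p =>
      obtain ⟨⟨pi, pj⟩, hp⟩ := p
      by_cases hj : 1 ≤ (pj : ℕ)
      · by_cases hi : 1 ≤ (pi : ℕ)
        · have h := (KEY (⟨(pi : ℕ) - 1, by have := pi.isLt; omega⟩,
            ⟨(pj : ℕ) - 1, by have := pj.isLt; omega⟩)).1
          have h' : g (Sum.inl ⟨(⟨(pi : ℕ) - 1 + 1, by have := pi.isLt; omega⟩,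
              ⟨(pj : ℕ) - 1 + 1, by have := pj.isLt; omega⟩),
            fun hc => by have h2 : (pj : ℕ) - 1 + 1 = 0 := hc.2; omega⟩) = 0 := h
          have heq : (⟨(⟨(pi : ℕ) - 1 + 1, by have := pi.isLt; omega⟩,
              ⟨(pj : ℕ) - 1 + 1, by have := pj.isLt; omega⟩),
            fun hc => by have h2 : (pj : ℕ) - 1 + 1 = 0 := hc.2; omega⟩ :
              {p : Fin n × Fin n // ¬((p.1 : ℕ) = 0 ∧ (p.2 : ℕ) = 0)}) = ⟨(pi, pj), hp⟩ :=
            Subtype.ext (Prod.ext (Fin.ext (show (pi : ℕ) - 1 + 1 = (pi : ℕ) by omega))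
              (Fin.ext (show (pj : ℕ) - 1 + 1 = (pj : ℕ) by omega)))
          rw [heq] at h'
          exact h'
        · have h := EV1 pi pj hj
          rw [dif_neg hi, add_zero] at h
          have h2 : g (Sum.inl ⟨(pi, pj), hp⟩) *
              (tau n (pj : ℕ) * sigma n (pi : ℕ) * ((n:ℝ) / 2 * ((n:ℝ) / 2))) = 0 := by
            linear_combination h
          refine (mul_eq_zero.mp h2).resolve_right ?_
          exact mul_ne_zero (mul_ne_zero
            (taunz _ (by omega) (by have := pj.isLt; omega)) (ne_of_gt (sigpos _)))
            (ne_of_gt hNpos)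
      · have hi : 1 ≤ (pi : ℕ) := by
          by_contra hi'
          exact hp ⟨show (pi : ℕ) = 0 by omega, show (pj : ℕ) = 0 by omega⟩
        have h := EV2 pi pj hi
        rw [dif_neg hj, add_zero] at h
        have h2 : g (Sum.inl ⟨(pi, pj), hp⟩) *
            (tau n (pi : ℕ) * sigma n (pj : ℕ) * ((n:ℝ) / 2 * ((n:ℝ) / 2))) = 0 := by
          linear_combination -h
        refine (mul_eq_zero.mp h2).resolve_right ?_
        exact mul_ne_zero (mul_ne_zero
          (taunz _ (by omega) (by have := pi.isLt; omega)) (ne_of_gt (sigpos _)))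
          (ne_of_gt hNpos)
  refine ⟨hcard, hli, ?_⟩
  have hNE : Nonempty (eigIdx n) := ⟨Sum.inr (⟨0, by omega⟩, ⟨0, by omega⟩)⟩
  have hfr : Module.finrank ℝ
      (Matrix (Fin n) (Fin (n - 1)) ℝ × Matrix (Fin (n - 1)) (Fin n) ℝ) = 2 * n * (n - 1) := by
    rw [Module.finrank_prod, Module.finrank_matrix, Module.finrank_matrix,
      Module.finrank_self]
    simp only [Fintype.card_fin, mul_one]
    ring
  exact hli.span_eq_top_of_card_eq_finrank (hcard.trans hfr.symm)
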